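/- Fix z ∈ ℂ and let q0, q1, F, G : ℝ → ℂ be infinitely differentiable functions satisfying, for all x ∈ ℝ, the two stationary identities 2 G‴ + 2 q1 G′ + q1′ G − 3 (z − q0) F′ + 2 q0′ F = 0 and (1/6) F⁽⁵⁾ + (5/6) q1 F‴ + (5/4) q1′ F″ + ( (3/4) q1″ + (2/3) q1² ) F′ + ( (1/6) q1‴ + (2/3) q1 q1′ ) F + 3 (z − q0) G′ − q0′ G = 0. Then the function S(x) = −(1/6) F⁗(x) F(x) + (1/6) F‴(x) F′(x) − (1/12) F″(x)² − (5/6) q1(x) F″(x) F(x) − (5/12) q1′(x) F′(x) F(x) + (5/12) q1(x) F′(x)² − (1/3)( (1/2) q1″(x) + q1(x)² ) F(x)² + 2 G″(x) G(x) − G′(x)² + q1(x) G(x)² − 3 (z − q0(x)) F(x) G(x) is constant on ℝ; that is, S′(x) = 0 for all x ∈ ℝ. -/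

import Mathlib

/-- If `F` and `G` satisfy the stationary Boussinesq identities (5.12)-(5.13),
then the quantity `S_m(z)` of (5.14) is independent of `x`. -/
theorem stationary_Sm_is_constant
    (z : ℂ) (q0 q1 F G : ℝ → ℂ)
    (hq0 : ContDiff ℝ (⊤ : ℕ∞) q0) (hq1 : ContDiff ℝ (⊤ : ℕ∞) q1)
    (hF : ContDiff ℝ (⊤ : ℕ∞) F) (hG : ContDiff ℝ (⊤ : ℕ∞) G)
    (h1 : ∀ x : ℝ,
      2 * iteratedDeriv 3 G x + 2 * q1 x * deriv G x + deriv q1 x * G x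
        - 3 * (z - q0 x) * deriv F x + 2 * deriv q0 x * F x = 0)
    (h2 : ∀ x : ℝ,
      (1 / 6) * iteratedDeriv 5 F x + (5 / 6) * q1 x * iteratedDeriv 3 F x
        + (5 / 4) * deriv q1 x * iteratedDeriv 2 F x
        + ((3 / 4) * iteratedDeriv 2 q1 x + (2 / 3) * (q1 x) ^ 2) * deriv F x
        + ((1 / 6) * iteratedDeriv 3 q1 x + (2 / 3) * q1 x * deriv q1 x) * F x
        + 3 * (z - q0 x) * deriv G x - deriv q0 x * G x = 0) :
    ∀ x : ℝ,
      deriv (fun y =>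
        -(1 / 6) * iteratedDeriv 4 F y * F y
          + (1 / 6) * iteratedDeriv 3 F y * deriv F y
          - (1 / 12) * (iteratedDeriv 2 F y) ^ 2
          - (5 / 6) * q1 y * iteratedDeriv 2 F y * F y
          - (5 / 12) * deriv q1 y * deriv F y * F y
          + (5 / 12) * q1 y * (deriv F y) ^ 2
          - (1 / 3) * ((1 / 2) * iteratedDeriv 2 q1 y + (q1 y) ^ 2) * (F y) ^ 2
          + 2 * iteratedDeriv 2 G y * G y
          - (deriv G y) ^ 2
          + q1 y * (G y) ^ 2
          - 3 * (z - q0 y) * F y * G y) x = 0 := by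
  intro x
  have hsq : ∀ (f : ℝ → ℂ) (f' : ℂ), HasDerivAt f f' x →
      HasDerivAt (fun y => f y ^ 2) (2 * f x * f') x := by
    intro f f' h
    have : HasDerivAt (fun y => f y ^ 2) (f' * f x + f x * f') x := by
      simp only [pow_two]; exact h.mul h
    convert this using 1
    ring
  have key : ∀ (f : ℝ → ℂ), ContDiff ℝ (⊤ : ℕ∞) f → ∀ n : ℕ,
      HasDerivAt (iteratedDeriv n f) (iteratedDeriv (n + 1) f x) x := by
    intro f hf n
    rw [iteratedDeriv_succ]
    exact ((hf.differentiable_iteratedDeriv n (by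
      exact_mod_cast lt_top_iff_ne_top.2 (by simp))).differentiableAt).hasDerivAt
  have hF0 : HasDerivAt F (deriv F x) x := by
    simpa [iteratedDeriv_one] using key F hF 0
  have hF1 : HasDerivAt (deriv F) (iteratedDeriv 2 F x) x := by
    simpa [iteratedDeriv_one] using key F hF 1
  have hF2 := key F hF 2
  have hF3 := key F hF 3
  have hF4 := key F hF 4
  have hG0 : HasDerivAt G (deriv G x) x := by
    simpa [iteratedDeriv_one] using key G hG 0
  have hG1 : HasDerivAt (deriv G) (iteratedDeriv 2 G x) x := by
    simpa [iteratedDeriv_one] using key G hG 1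
  have hG2 := key G hG 2
  have hq10 : HasDerivAt q1 (deriv q1 x) x := by
    simpa [iteratedDeriv_one] using key q1 hq1 0
  have hq11 : HasDerivAt (deriv q1) (iteratedDeriv 2 q1 x) x := by
    simpa [iteratedDeriv_one] using key q1 hq1 1
  have hq12 := key q1 hq1 2
  have hq00 : HasDerivAt q0 (deriv q0 x) x := by
    simpa [iteratedDeriv_one] using key q0 hq0 0
  have H : HasDerivAt (fun y =>
        -(1 / 6) * iteratedDeriv 4 F y * F y
          + (1 / 6) * iteratedDeriv 3 F y * deriv F y
          - (1 / 12) * (iteratedDeriv 2 F y) ^ 2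
          - (5 / 6) * q1 y * iteratedDeriv 2 F y * F y
          - (5 / 12) * deriv q1 y * deriv F y * F y
          + (5 / 12) * q1 y * (deriv F y) ^ 2
          - (1 / 3) * ((1 / 2) * iteratedDeriv 2 q1 y + (q1 y) ^ 2) * (F y) ^ 2
          + 2 * iteratedDeriv 2 G y * G y
          - (deriv G y) ^ 2
          + q1 y * (G y) ^ 2
          - 3 * (z - q0 y) * F y * G y) _ x :=
    (((((((((((hF4.const_mul (-(1 / 6))).mul hF0).add
      ((hF3.const_mul (1 / 6)).mul hF1)).sub
      ((hsq _ _ hF2).const_mul (1 / 12))).sub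
      (((hq10.const_mul (5 / 6)).mul hF2).mul hF0)).sub
      (((hq11.const_mul (5 / 12)).mul hF1).mul hF0)).add
      ((hq10.const_mul (5 / 12)).mul (hsq _ _ hF1))).sub
      ((((hq12.const_mul (1 / 2)).add (hsq _ _ hq10)).const_mul (1 / 3)).mul
        (hsq _ _ hF0))).add
      ((hG2.const_mul 2).mul hG0)).sub (hsq _ _ hG1)).add
      (hq10.mul (hsq _ _ hG0))).sub
      ((((((hasDerivAt_const x z).sub hq00).const_mul 3).mul hF0).mul hG0))
  rw [H.deriv]
  have e1 := h1 x
  have e2 := h2 x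
  push_cast
  simp only [Pi.add_apply, Pi.sub_apply, Pi.mul_apply]
  linear_combination G x * e1 - F x * e2
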